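/- Let (A,m) be an excellent normal local domain of dimension d ≥ 1, and let I be an ideal of A. If G_I(A) is unmixed and equidimensional, then at least one of the following holds: (1) (I^n)^sat = I^n for all n ≥ 1; (2) ℓ(I) = d. -/

import Mathlib

/-!
If `(Iⁿ)^sat ≠ Iⁿ`, some `y ∉ Iⁿ` satisfies `m y ⊆ Iⁿ`. Choosing `t < n` with `y ∈ Iᵗ \ Iᵗ⁺¹`, the
initial form `y t^t` is a nonzero element of `G = G_I(A)` killed by `m`, so an associated prime `P`
of `G` contains `mG`. Then `G/P` is a quotient of the fiber cone `G/mG`, whence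
`d = dim G/P ≤ ℓ(I)`. Conversely `ℓ(I) ≤ dim G ≤ d`, because the minimal primes of `G` are
associated, so `dim G/q = d` for each of them.
-/

open IsLocalRing Filter Polynomial

noncomputable section
set_option synthInstance.maxHeartbeats 1000000
set_option maxHeartbeats 2000000
set_option linter.unusedVariables false

/-- The associated graded ring `G_I(A) = ⊕ₙ Iⁿ/Iⁿ⁺¹` of `A` with respect to `I`,
realized as the quotient `R(I)/I·R(I)` of the Rees algebra. -/
abbrev assocGraded {A : Type} [CommRing A] (I : Ideal A) :=
  (reesAlgebra I) ⧸ (Ideal.map (algebraMap A (reesAlgebra I)) I)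

/-- The fiber cone `R(I)/m·R(I) = ⊕ₙ Iⁿ/m·Iⁿ`. -/
abbrev fiberCone (A : Type) [CommRing A] [IsLocalRing A] (I : Ideal A) :=
  (reesAlgebra I) ⧸ (Ideal.map (algebraMap A (reesAlgebra I)) (maximalIdeal A))

/-- The analytic spread `ℓ(I)`: the Krull dimension of the fiber cone. -/
noncomputable def analyticSpread (A : Type) [CommRing A] [IsLocalRing A] (I : Ideal A) :
    WithBot ℕ∞ :=
  ringKrullDim (fiberCone A I)

/-- A ring `G` is unmixed and equidimensional (of dimension `d`) if `dim G/P = d`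
for every associated prime `P` of `G` (as a module over itself). -/
def UnmixedEquidim (G : Type*) [CommRing G] (d : ℕ) : Prop :=
  ∀ P ∈ associatedPrimes G G, ringKrullDim (G ⧸ P) = (d : WithBot ℕ∞)

/-- The saturation `J^sat = J : m^∞ = ⋃ᵢ (J : mⁱ)`. -/
noncomputable def Ideal.sat {A : Type} [CommRing A] [IsLocalRing A] (J : Ideal A) : Ideal A :=
  ⨆ i : ℕ, Submodule.colon (J : Submodule A A) (((maximalIdeal A) ^ i : Ideal A) : Submodule A A)

/-- A regular local ring: a Noetherian local ring whose maximal ideal (the set of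
nonunits) can be generated by `dim`-many elements. -/
def IsRegularLocalRingD (B : Type) [CommRing B] : Prop :=
  IsNoetherianRing B ∧ IsLocalRing B ∧
    ∃ (n : ℕ) (s : Finset B), ringKrullDim B = (n : WithBot ℕ∞) ∧ s.card = n ∧
      ∀ x : B, x ∈ Ideal.span (s : Set B) ↔ ¬ IsUnit x

/-- A ring is catenary if any two saturated chains of primes with the same endpoints
have the same length. -/
def IsCatenaryRing (B : Type) [CommRing B] : Prop :=
  ∀ c₁ c₂ : RelSeries (α := PrimeSpectrum B) {p : PrimeSpectrum B × PrimeSpectrum B | p.1 ⋖ p.2},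
    c₁.head = c₂.head → c₁.last = c₂.last → c₁.length = c₂.length

/-- `A` is universally catenary: every finitely generated `A`-algebra is catenary. -/
def UnivCatenary (A : Type) [CommRing A] : Prop :=
  ∀ (B : Type) [CommRing B] [Algebra A B], Algebra.FiniteType A B → IsCatenaryRing B

/-- A ring all of whose localizations at primes are regular local rings. -/
def IsRegularRingD (B : Type) [CommRing B] : Prop :=
  IsNoetherianRing B ∧
    ∀ (P : Ideal B) (hP : P.IsPrime), IsRegularLocalRingD (Localization.AtPrime P)

/-- A `k`-algebra `R` is geometrically regular: `k' ⊗[k] R` is a regular ring for every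
finite field extension `k'` of `k`. -/
def GeomRegularOver (k R : Type) [Field k] [CommRing R] [Algebra k R] : Prop :=
  ∀ (k' : Type) [Field k'] [Algebra k k'], FiniteDimensional k k' →
    IsRegularRingD (TensorProduct k k' R)

/-- `A` is a G-ring: for every prime `P`, the formal fibers of `A_P` are geometrically
regular, i.e. for every prime `Q` of `A_P`, the fiber `κ(Q) ⊗ (A_P)^` of the completion
map is geometrically regular over the residue field `κ(Q)`. -/
def IsGRing (A : Type) [CommRing A] : Prop :=
  ∀ (P : Ideal A) (hP : P.IsPrime) (Q : Ideal (Localization.AtPrime P)) (hQ : Q.IsPrime),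
    GeomRegularOver (ResidueField (Localization.AtPrime Q))
      (TensorProduct (Localization.AtPrime P) (ResidueField (Localization.AtPrime Q))
        (AdicCompletion (maximalIdeal (Localization.AtPrime P)) (Localization.AtPrime P)))

/-- `A` is J-2: the regular locus of every finitely generated `A`-algebra is open. -/
def IsJ2 (A : Type) [CommRing A] : Prop :=
  ∀ (B : Type) [CommRing B] [Algebra A B], Algebra.FiniteType A B →
    IsOpen {q : PrimeSpectrum B | IsRegularLocalRingD (Localization.AtPrime q.asIdeal)}

/-- An excellent ring: Noetherian, universally catenary G-ring satisfying J-2. -/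
def IsExcellentD (A : Type) [CommRing A] : Prop :=
  IsNoetherianRing A ∧ UnivCatenary A ∧ IsGRing A ∧ IsJ2 A


namespace Ideal

theorem exists_lt_mem_pow_notMem_pow_succ {A : Type*} [CommRing A] (I : Ideal A) {x : A} :
    ∀ {n : ℕ}, x ∉ I ^ n → ∃ t < n, x ∈ I ^ t ∧ x ∉ I ^ (t + 1)
  | 0, hx => absurd (by simp) hx
  | n + 1, hx => by
    by_cases hn : x ∈ I ^ n
    · exact ⟨n, n.lt_succ_self, hn, hx⟩
    obtain ⟨t, ht, h⟩ := I.exists_lt_mem_pow_notMem_pow_succ hn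
    exact ⟨t, ht.trans n.lt_succ_self, h⟩

section Saturation

variable {A : Type} [CommRing A] [IsLocalRing A] {J : Ideal A}

theorem le_sat (J : Ideal A) : J ≤ J.sat :=
  le_trans (by simp) (le_iSup _ 0)

theorem exists_forall_pow_maximalIdeal_mul_mem_of_mem_sat {x : A} (hx : x ∈ J.sat) :
    ∃ i : ℕ, ∀ a ∈ maximalIdeal A ^ i, a * x ∈ J := by
  have hmono : Monotone fun i : ℕ => Submodule.colon (J : Submodule A A)
      ((maximalIdeal A ^ i : Ideal A) : Set A) :=
    fun i j hij => Submodule.colon_mono le_rfl (Ideal.pow_le_pow_right hij)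
  obtain ⟨i, hi⟩ := (Submodule.mem_iSup_of_directed _ hmono.directed_le).mp hx
  exact ⟨i, fun a ha => by simpa [mul_comm] using Submodule.mem_colon.mp hi a ha⟩

theorem exists_notMem_forall_maximalIdeal_mul_mem {x : A} (hx : x ∉ J) (i : ℕ)
    (h : ∀ a ∈ maximalIdeal A ^ i, a * x ∈ J) : ∃ y ∉ J, ∀ a ∈ maximalIdeal A, a * y ∈ J := by
  induction i with
  | zero => exact absurd (by simpa using h 1 (by simp)) hx
  | succ i ih =>
    by_cases hi : ∀ a ∈ maximalIdeal A ^ i, a * x ∈ J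
    · exact ih hi
    push Not at hi
    obtain ⟨c, hc, hcx⟩ := hi
    refine ⟨c * x, hcx, fun a ha => ?_⟩
    rw [← mul_assoc, mul_comm a]
    exact h _ (pow_succ (maximalIdeal A) i ▸ mul_mem_mul hc ha)

theorem exists_notMem_forall_maximalIdeal_mul_mem_of_sat_ne (h : J.sat ≠ J) :
    ∃ y ∉ J, ∀ a ∈ maximalIdeal A, a * y ∈ J := by
  obtain ⟨x, hxsat, hx⟩ := SetLike.exists_of_lt (lt_of_le_of_ne J.le_sat (Ne.symm h))
  obtain ⟨i, hi⟩ := exists_forall_pow_maximalIdeal_mul_mem_of_mem_sat hxsat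
  exact exists_notMem_forall_maximalIdeal_mul_mem hx i hi

end Saturation

end Ideal

namespace reesAlgebra

variable {A : Type} [CommRing A] (I : Ideal A)

def monomial {t : ℕ} {x : A} (hx : x ∈ I ^ t) : reesAlgebra I :=
  ⟨Polynomial.monomial t x, reesAlgebra.monomial_mem.mpr hx⟩

theorem algebraMap_mul_monomial {t : ℕ} {x : A} (hx : x ∈ I ^ t) (a : A) :
    algebraMap A (reesAlgebra I) a * monomial I hx = monomial I (Ideal.mul_mem_left _ a hx) :=
  Subtype.ext (C_mul_monomial ..)

theorem coeff_mem_pow_succ_of_mem_map {f : reesAlgebra I}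
    (hf : f ∈ I.map (algebraMap A (reesAlgebra I))) (k : ℕ) :
    (f : A[X]).coeff k ∈ I ^ (k + 1) := by
  induction hf using Submodule.span_induction generalizing k with
  | mem f hf =>
    obtain ⟨a, ha, rfl⟩ := hf
    rcases k with _ | k
    · simpa using ha
    · simp [show ((algebraMap A (reesAlgebra I) a : reesAlgebra I) : A[X]) = C a from rfl]
  | zero => simp
  | add f g _ _ hf hg => simpa using add_mem (hf k) (hg k)
  | smul c f _ hf =>
    rw [smul_eq_mul, Subalgebra.coe_mul, coeff_mul]
    refine sum_mem fun uv huv => ?_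
    rw [← Finset.HasAntidiagonal.mem_antidiagonal.mp huv, add_assoc, pow_add]
    exact Ideal.mul_mem_mul (c.2 uv.1) (hf uv.2)

theorem monomial_mem_map_of_mem_pow_succ {t : ℕ} {x : A} (hx : x ∈ I ^ t)
    (hx' : x ∈ I ^ (t + 1)) : monomial I hx ∈ I.map (algebraMap A (reesAlgebra I)) := by
  rw [pow_succ'] at hx'
  refine Submodule.mul_induction_on' (C := fun x _ => ∀ hx : x ∈ I ^ t,
    monomial I hx ∈ I.map (algebraMap A (reesAlgebra I))) (fun b hb p hp _ => ?_)
    (fun u hu v hv hu' hv' _ => ?_) hx' hx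
  · rw [← algebraMap_mul_monomial I hp]
    exact Ideal.mul_mem_right _ _ (Ideal.mem_map_of_mem _ hb)
  · have hu : u ∈ I ^ t := Ideal.mul_le_right hu
    have hv : v ∈ I ^ t := Ideal.mul_le_right hv
    rw [show monomial I _ = monomial I hu + monomial I hv from Subtype.ext (map_add ..)]
    exact add_mem (hu' hu) (hv' hv)

theorem monomial_mem_map_iff {t : ℕ} {x : A} (hx : x ∈ I ^ t) :
    monomial I hx ∈ I.map (algebraMap A (reesAlgebra I)) ↔ x ∈ I ^ (t + 1) :=
  ⟨fun h => by simpa [monomial] using coeff_mem_pow_succ_of_mem_map I h t,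
    monomial_mem_map_of_mem_pow_succ I hx⟩

end reesAlgebra

section KrullDimension

variable {R : Type*} [CommRing R]

theorem ringKrullDim_quotient_eq_coheight (p : PrimeSpectrum R) :
    ringKrullDim (R ⧸ p.asIdeal) = Order.coheight p := by
  rw [ringKrullDim_quotient, Order.coheight_eq_krullDim_Ici]
  rfl

theorem ringKrullDim_le_of_forall_minimalPrimes {n : WithBot ℕ∞}
    (h : ∀ q ∈ minimalPrimes R, ringKrullDim (R ⧸ q) ≤ n) : ringKrullDim R ≤ n := by
  rw [ringKrullDim, Order.krullDim_eq_iSup_coheight]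
  refine iSup_le fun p => ?_
  obtain ⟨q, hq, hqp⟩ := Ideal.exists_minimalPrimes_le (J := p.asIdeal) bot_le
  calc (Order.coheight p : WithBot ℕ∞)
      ≤ Order.coheight (⟨q, hq.1.1⟩ : PrimeSpectrum R) := by
        exact_mod_cast Order.coheight_anti (show (⟨q, hq.1.1⟩ : PrimeSpectrum R) ≤ p from hqp)
    _ = ringKrullDim (R ⧸ q) := (ringKrullDim_quotient_eq_coheight _).symm
    _ ≤ n := h q hq

theorem minimalPrimes_subset_associatedPrimes [IsNoetherianRing R] :
    minimalPrimes R ⊆ associatedPrimes R R := by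
  have := Module.associatedPrimes.minimalPrimes_annihilator_subset_associatedPrimes R R
  rwa [Module.annihilator_eq_bot.mpr inferInstance] at this

theorem ringKrullDim_le_of_unmixedEquidim [IsNoetherianRing R] {d : ℕ}
    (h : UnmixedEquidim R d) : ringKrullDim R ≤ d :=
  ringKrullDim_le_of_forall_minimalPrimes fun q hq =>
    (h q (minimalPrimes_subset_associatedPrimes hq)).le

theorem ringKrullDim_quotient_quotient_le {J K : Ideal R} {P : Ideal (R ⧸ J)}
    (h : K.map (Ideal.Quotient.mk J) ≤ P) :
    ringKrullDim ((R ⧸ J) ⧸ P) ≤ ringKrullDim (R ⧸ K) := by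
  let φ : R →+* (R ⧸ J) ⧸ P := (Ideal.Quotient.mk P).comp (Ideal.Quotient.mk J)
  have hφ : ∀ r ∈ K, φ r = 0 := fun r hr =>
    Ideal.Quotient.eq_zero_iff_mem.mpr (h (Ideal.mem_map_of_mem _ hr))
  exact ringKrullDim_le_of_surjective (Ideal.Quotient.lift K φ hφ)
    (Ideal.Quotient.lift_surjective_of_surjective _ hφ
      (Ideal.Quotient.mk_surjective.comp Ideal.Quotient.mk_surjective))

end KrullDimension

section AssociatedGraded

variable {A : Type} [CommRing A] [IsLocalRing A] {I : Ideal A}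

theorem analyticSpread_le_ringKrullDim_assocGraded (hI : I ≠ ⊤) :
    analyticSpread A I ≤ ringKrullDim (assocGraded I) :=
  ringKrullDim_le_of_surjective _
    (Ideal.Quotient.factor_surjective (Ideal.map_mono (le_maximalIdeal hI)))

theorem exists_ne_zero_map_maximalIdeal_le_colon {n : ℕ} {y : A} (hy : y ∉ I ^ n)
    (hmy : ∀ a ∈ maximalIdeal A, a * y ∈ I ^ n) :
    ∃ ξ : assocGraded I, ξ ≠ 0 ∧
      ((maximalIdeal A).map (algebraMap A (reesAlgebra I))).map (Ideal.Quotient.mk _) ≤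
        (⊥ : Submodule (assocGraded I) (assocGraded I)).colon {ξ} := by
  obtain ⟨t, htn, hyt, hyt'⟩ := I.exists_lt_mem_pow_notMem_pow_succ hy
  refine ⟨Ideal.Quotient.mk _ (reesAlgebra.monomial I hyt), ?_, ?_⟩
  · rwa [Ne, Ideal.Quotient.eq_zero_iff_mem, reesAlgebra.monomial_mem_map_iff]
  rw [Ideal.map_map, Ideal.map_le_iff_le_comap]
  intro a ha
  rw [Ideal.mem_comap, Submodule.mem_colon_singleton, Submodule.mem_bot, smul_eq_mul,
    RingHom.comp_apply, ← map_mul, reesAlgebra.algebraMap_mul_monomial,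
    Ideal.Quotient.eq_zero_iff_mem, reesAlgebra.monomial_mem_map_iff]
  exact Ideal.pow_le_pow_right htn (hmy a ha)

end AssociatedGraded

theorem stmt14_general (A : Type) [CommRing A] [IsLocalRing A]
    (hexc : IsExcellentD A)
    (d : ℕ)
    (I : Ideal A)
    (hunmix : UnmixedEquidim (assocGraded I) d) :
    (∀ n : ℕ, 1 ≤ n → (I ^ n).sat = I ^ n) ∨ analyticSpread A I = (d : WithBot ℕ∞) := by
  have : IsNoetherianRing A := hexc.1
  by_cases hI : I = ⊤
  · refine Or.inl fun n _ => ?_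
    rw [hI, Ideal.top_pow]
    exact top_le_iff.mp (Ideal.le_sat ⊤)
  refine or_iff_not_imp_left.mpr fun hsat => ?_
  push Not at hsat
  obtain ⟨n, -, hn⟩ := hsat
  obtain ⟨y, hy, hmy⟩ := Ideal.exists_notMem_forall_maximalIdeal_mul_mem_of_sat_ne hn
  obtain ⟨ξ, hξ, hann⟩ := exists_ne_zero_map_maximalIdeal_le_colon hy hmy
  obtain ⟨P, hP, hle⟩ :=
    exists_le_isAssociatedPrime_of_isNoetherianRing (R := assocGraded I) ξ hξ
  refine le_antisymm ?_ ?_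
  · exact (analyticSpread_le_ringKrullDim_assocGraded hI).trans
      (ringKrullDim_le_of_unmixedEquidim hunmix)
  · rw [← hunmix P hP]
    exact ringKrullDim_quotient_quotient_le (hann.trans hle)

/-- For an excellent normal local domain with `G_I(A)` unmixed and equidimensional,
either `(Iⁿ)^sat = Iⁿ` for all `n ≥ 1`, or `ℓ(I) = d`. -/
theorem stmt14 (A : Type) [CommRing A] [IsLocalRing A] [IsDomain A] [IsIntegrallyClosed A]
    (hexc : IsExcellentD A)
    (d : ℕ) (hd : 1 ≤ d) (hdim : ringKrullDim A = (d : WithBot ℕ∞))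
    (I : Ideal A)
    (hunmix : UnmixedEquidim (assocGraded I) d) :
    (∀ n : ℕ, 1 ≤ n → (I ^ n).sat = I ^ n) ∨ analyticSpread A I = (d : WithBot ℕ∞) :=
  stmt14_general A hexc d I hunmix
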